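/- Suppose (E,Dom(E)) is dominated by an F-expectation (Ẽ,Dom(Ẽ)) satisfying (H0)–(H5), and let {X(τ,σ):τ,σ∈S_0} be a biadmissible family with sup_{τ,σ∈S_0} E[X(τ,σ)] < ∞. Define U_1(τ,σ) = esssup_{τ1∈S_τ} E_τ[X(τ1,σ)]. Then for all stopping times τ, σ_1, σ_2 ∈ S_0: |E[U_1(τ,σ_1)] − E[U_1(τ,σ_2)]| ≤ sup_{S∈S_0} Ẽ[|X(S,σ_1) − X(S,σ_2)|]. -/

import Mathlib

open MeasureTheory Filter Set

noncomputable section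

namespace OptMultStop

variable {Ω : Type*}

/-- A real function is right-continuous with left limits (RCLL) on `[0, T]`. -/
def RCLLOn (f : ℝ → ℝ) (T : ℝ) : Prop :=
  (∀ t ∈ Set.Ico (0 : ℝ) T, ContinuousWithinAt f (Set.Ici t) t) ∧
    ∀ t ∈ Set.Ioc (0 : ℝ) T, ∃ l : ℝ, Filter.Tendsto f (nhdsWithin t (Set.Iio t)) (nhds l)

/-- A real function is right-continuous on `[0, T)`. -/
def RCOn (f : ℝ → ℝ) (T : ℝ) : Prop :=
  ∀ t ∈ Set.Ico (0 : ℝ) T, ContinuousWithinAt f (Set.Ici t) t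

/-- `τ` is a stopping time for `ℱ` taking values in `[s ·, T]`; for `s = S` a stopping
time this encodes membership in `S_S`. -/
def IsStopIn [m : MeasurableSpace Ω] (ℱ : Filtration ℝ m) (T : ℝ) (s τ : Ω → ℝ) : Prop :=
  IsStoppingTime ℱ (fun ω => (τ ω : WithTop ℝ)) ∧ (∀ ω, s ω ≤ τ ω) ∧ ∀ ω, τ ω ≤ T

/-- Membership in `S_0`: a stopping time with values in `[0, T]`. -/
def Stop0 [m : MeasurableSpace Ω] (ℱ : Filtration ℝ m) (T : ℝ) (τ : Ω → ℝ) : Prop :=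
  IsStopIn ℱ T (fun _ => (0 : ℝ)) τ

/-- `g` is an essential supremum of the family of random variables `s`. -/
def IsEssSupFam [MeasurableSpace Ω] (μ : Measure Ω) (s : Set (Ω → ℝ)) (g : Ω → ℝ) : Prop :=
  (∀ f ∈ s, f ≤ᵐ[μ] g) ∧ ∀ h : Ω → ℝ, (∀ f ∈ s, f ≤ᵐ[μ] h) → g ≤ᵐ[μ] h

/-- `g` is an essential infimum of the family of random variables `s`. -/
def IsEssInfFam [MeasurableSpace Ω] (μ : Measure Ω) (s : Set (Ω → ℝ)) (g : Ω → ℝ) : Prop :=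
  (∀ f ∈ s, g ≤ᵐ[μ] f) ∧ ∀ h : Ω → ℝ, (∀ f ∈ s, h ≤ᵐ[μ] f) → h ≤ᵐ[μ] g

/-- An `𝔽`-consistent nonlinear expectation `(E, Dom(E))` on the horizon `[0, T]`,
together with its conditional versions at stopping times, satisfying the domain
axioms (D1)-(D3), (A1)-(A4) at stopping times, and hypotheses (H0)-(H5). -/
structure FExp [m : MeasurableSpace Ω] (μ : Measure Ω) (T : ℝ) (ℱ : Filtration ℝ m) where
  /-- the domain `Dom(E)` -/
  Dom : Set (Ω → ℝ)
  /-- `cond τ ξ` is the conditional expectation `E_τ[ξ]` at the stopping time `τ` -/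
  cond : (Ω → ℝ) → (Ω → ℝ) → Ω → ℝ
  /-- `E0 ξ` is the (deterministic) value `E[ξ] = E_0[ξ]` -/
  E0 : (Ω → ℝ) → ℝ
  zero_mem : (fun _ => (0 : ℝ)) ∈ Dom
  one_mem : (fun _ => (1 : ℝ)) ∈ Dom
  /-- (H4): all constants belong to the domain -/
  const_mem : ∀ c : ℝ, (fun _ => c) ∈ Dom
  add_mem : ∀ {ξ η : Ω → ℝ}, ξ ∈ Dom → η ∈ Dom → ξ + η ∈ Dom
  indicator_mem : ∀ {ξ : Ω → ℝ}, ξ ∈ Dom → ∀ {A : Set Ω}, MeasurableSet A →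
    A.indicator ξ ∈ Dom
  sandwich_mem : ∀ {ξ η : Ω → ℝ}, η ∈ Dom → (∀ᵐ ω ∂μ, 0 ≤ ξ ω ∧ ξ ω ≤ η ω) → ξ ∈ Dom
  cond_mem : ∀ {τ ξ : Ω → ℝ}, Stop0 ℱ T τ → ξ ∈ Dom → 0 ≤ᵐ[μ] ξ → cond τ ξ ∈ Dom
  cond_nonneg : ∀ {τ ξ : Ω → ℝ}, Stop0 ℱ T τ → ξ ∈ Dom → 0 ≤ᵐ[μ] ξ → 0 ≤ᵐ[μ] cond τ ξ
  /-- `E_τ[ξ]` is `F_τ`-measurable -/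
  cond_adapted : ∀ {τ ξ : Ω → ℝ} (hτ : Stop0 ℱ T τ), ξ ∈ Dom → 0 ≤ᵐ[μ] ξ →
    Measurable[hτ.1.measurableSpace] (cond τ ξ)
  /-- monotonicity -/
  mono : ∀ {τ ξ η : Ω → ℝ}, Stop0 ℱ T τ → ξ ∈ Dom → 0 ≤ᵐ[μ] ξ → η ∈ Dom → 0 ≤ᵐ[μ] η →
    ξ ≤ᵐ[μ] η → cond τ ξ ≤ᵐ[μ] cond τ η
  /-- strict monotonicity -/
  strict_mono : ∀ {τ ξ η : Ω → ℝ}, Stop0 ℱ T τ → ξ ∈ Dom → 0 ≤ᵐ[μ] ξ → η ∈ Dom →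
    0 ≤ᵐ[μ] η → ξ ≤ᵐ[μ] η → cond τ ξ =ᵐ[μ] cond τ η → ξ =ᵐ[μ] η
  /-- time consistency -/
  time_consistent : ∀ {σ τ ξ : Ω → ℝ}, Stop0 ℱ T σ → Stop0 ℱ T τ → (∀ ω, σ ω ≤ τ ω) →
    ξ ∈ Dom → 0 ≤ᵐ[μ] ξ → cond σ (cond τ ξ) =ᵐ[μ] cond σ ξ
  /-- zero-one law -/
  zero_one : ∀ {τ ξ : Ω → ℝ} (hτ : Stop0 ℱ T τ), ξ ∈ Dom → 0 ≤ᵐ[μ] ξ →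
    ∀ {A : Set Ω}, MeasurableSet[hτ.1.measurableSpace] A →
    cond τ (A.indicator ξ) =ᵐ[μ] A.indicator (cond τ ξ)
  /-- translation invariance -/
  translation : ∀ {τ ξ η : Ω → ℝ} (hτ : Stop0 ℱ T τ), ξ ∈ Dom → 0 ≤ᵐ[μ] ξ → η ∈ Dom →
    0 ≤ᵐ[μ] η → Measurable[hτ.1.measurableSpace] η → cond τ (ξ + η) =ᵐ[μ] cond τ ξ + η
  /-- `F_0` is trivial: `E_0[ξ]` is the constant `E0 ξ` -/
  E0_eq : ∀ {ξ : Ω → ℝ}, ξ ∈ Dom → 0 ≤ᵐ[μ] ξ →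
    cond (fun _ => (0 : ℝ)) ξ =ᵐ[μ] fun _ => E0 ξ
  /-- the process `t ↦ E_t[ξ]` has RCLL paths -/
  rcll_paths : ∀ {ξ : Ω → ℝ}, ξ ∈ Dom → 0 ≤ᵐ[μ] ξ →
    ∀ᵐ ω ∂μ, RCLLOn (fun t => cond (fun _ => t) ξ ω) T
  /-- (H0) -/
  h0 : ∀ {A : Set Ω}, MeasurableSet A → 0 < μ A →
    Tendsto (fun n : ℕ => E0 (A.indicator fun _ => (n : ℝ))) atTop atTop
  /-- (H1) -/
  h1 : ∀ {ξ : Ω → ℝ}, ξ ∈ Dom → 0 ≤ᵐ[μ] ξ → ∀ {A : ℕ → Set Ω},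
    (∀ n, MeasurableSet (A n)) → Monotone A → (∀ᵐ ω ∂μ, ω ∈ ⋃ n, A n) →
    Tendsto (fun n => E0 ((A n).indicator ξ)) atTop (nhds (E0 ξ))
  /-- (H2) -/
  h2 : ∀ {ξ η : Ω → ℝ}, ξ ∈ Dom → 0 ≤ᵐ[μ] ξ → η ∈ Dom → 0 ≤ᵐ[μ] η →
    ∀ {A : ℕ → Set Ω}, (∀ n, MeasurableSet (A n)) → Antitone A →
    (∀ᵐ ω ∂μ, ω ∉ ⋂ n, A n) →
    Tendsto (fun n => E0 (ξ + (A n).indicator η)) atTop (nhds (E0 ξ))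
  /-- (H5) -/
  h5 : ∀ {ξ : ℕ → Ω → ℝ} {ζ : Ω → ℝ}, (∀ n, ξ n ∈ Dom) → (∀ n, 0 ≤ᵐ[μ] ξ n) →
    (∀ᵐ ω ∂μ, Tendsto (fun n => ξ n ω) atTop (nhds (ζ ω))) →
    (∃ C : ℝ, ∃ᶠ n in atTop, E0 (ξ n) ≤ C) → ζ ∈ Dom

variable [m : MeasurableSpace Ω] {μ : Measure Ω} {T : ℝ} {ℱ : Filtration ℝ m}

/-- (H6): sub-additivity. -/
def FExp.Subadditive (𝔈 : FExp μ T ℱ) : Prop :=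
  ∀ ⦃τ ξ η : Ω → ℝ⦄, Stop0 ℱ T τ → ξ ∈ 𝔈.Dom → 0 ≤ᵐ[μ] ξ → η ∈ 𝔈.Dom → 0 ≤ᵐ[μ] η →
    𝔈.cond τ (ξ + η) ≤ᵐ[μ] 𝔈.cond τ ξ + 𝔈.cond τ η

/-- (H7): positive homogeneity. -/
def FExp.PosHom (𝔈 : FExp μ T ℱ) : Prop :=
  ∀ ⦃τ ξ : Ω → ℝ⦄ (l : ℝ), 0 ≤ l → Stop0 ℱ T τ → ξ ∈ 𝔈.Dom → 0 ≤ᵐ[μ] ξ →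
    𝔈.cond τ (fun ω => l * ξ ω) =ᵐ[μ] fun ω => l * 𝔈.cond τ ξ ω

/-- Admissible family of rewards indexed by stopping times. -/
def Admissible (𝔈 : FExp μ T ℱ) (X : (Ω → ℝ) → Ω → ℝ) : Prop :=
  (∀ τ : Ω → ℝ, ∀ hτ : Stop0 ℱ T τ, X τ ∈ 𝔈.Dom ∧ 0 ≤ᵐ[μ] X τ ∧
      Measurable[hτ.1.measurableSpace] (X τ)) ∧
    ∀ τ σ : Ω → ℝ, Stop0 ℱ T τ → Stop0 ℱ T σ →
      ∀ᵐ ω ∂μ, τ ω = σ ω → X τ ω = X σ ω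

/-- `sup_{τ ∈ S_0} E[X(τ)] < ∞`. -/
def BddRewardE0 (𝔈 : FExp μ T ℱ) (X : (Ω → ℝ) → Ω → ℝ) : Prop :=
  ∃ C : ℝ, ∀ τ : Ω → ℝ, Stop0 ℱ T τ → 𝔈.E0 (X τ) ≤ C

/-- `v` is the value function family of the single stopping problem for the reward `X`:
`v(S) = esssup_{τ ∈ S_S} E_S[X(τ)]`. -/
def IsValueFam (𝔈 : FExp μ T ℱ) (X v : (Ω → ℝ) → Ω → ℝ) : Prop :=
  ∀ S : Ω → ℝ, Stop0 ℱ T S →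
    IsEssSupFam μ {g | ∃ τ : Ω → ℝ, IsStopIn ℱ T S τ ∧ g = 𝔈.cond S (X τ)} (v S)

/-- An `E`-supermartingale system. -/
def SupermartSys (𝔈 : FExp μ T ℱ) (h : (Ω → ℝ) → Ω → ℝ) : Prop :=
  (∀ τ : Ω → ℝ, ∀ hτ : Stop0 ℱ T τ, h τ ∈ 𝔈.Dom ∧ 0 ≤ᵐ[μ] h τ ∧
      Measurable[hτ.1.measurableSpace] (h τ)) ∧
    ∀ τ σ : Ω → ℝ, Stop0 ℱ T τ → Stop0 ℱ T σ → (∀ᵐ ω ∂μ, τ ω ≤ σ ω) →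
      𝔈.cond τ (h σ) ≤ᵐ[μ] h τ

/-- Right-continuity along stopping times in `E`-expectation (RCE). -/
def RCE (𝔈 : FExp μ T ℱ) (X : (Ω → ℝ) → Ω → ℝ) : Prop :=
  ∀ τ : Ω → ℝ, Stop0 ℱ T τ → ∀ τs : ℕ → Ω → ℝ, (∀ n, Stop0 ℱ T (τs n)) →
    (∀ᵐ ω ∂μ, Antitone (fun n => τs n ω) ∧
      Tendsto (fun n => τs n ω) atTop (nhds (τ ω))) →
    Tendsto (fun n => 𝔈.E0 (X (τs n))) atTop (nhds (𝔈.E0 (X τ)))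

/-- Left-continuity along stopping times in `E`-expectation (LCE). -/
def LCE (𝔈 : FExp μ T ℱ) (X : (Ω → ℝ) → Ω → ℝ) : Prop :=
  ∀ τ : Ω → ℝ, Stop0 ℱ T τ → ∀ τs : ℕ → Ω → ℝ, (∀ n, Stop0 ℱ T (τs n)) →
    (∀ᵐ ω ∂μ, Monotone (fun n => τs n ω) ∧
      Tendsto (fun n => τs n ω) atTop (nhds (τ ω))) →
    Tendsto (fun n => 𝔈.E0 (X (τs n))) atTop (nhds (𝔈.E0 (X τ)))

/-- Continuity along stopping times in `E`-expectation (CE). -/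
def CE (𝔈 : FExp μ T ℱ) (X : (Ω → ℝ) → Ω → ℝ) : Prop :=
  RCE 𝔈 X ∧ LCE 𝔈 X

/-- Right-continuity along stopping times (RC): a.s. pointwise convergence. -/
def RCfam (𝔈 : FExp μ T ℱ) (X : (Ω → ℝ) → Ω → ℝ) : Prop :=
  ∀ τ : Ω → ℝ, Stop0 ℱ T τ → ∀ τs : ℕ → Ω → ℝ, (∀ n, Stop0 ℱ T (τs n)) →
    (∀ᵐ ω ∂μ, Antitone (fun n => τs n ω) ∧
      Tendsto (fun n => τs n ω) atTop (nhds (τ ω))) →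
    ∀ᵐ ω ∂μ, Tendsto (fun n => X (τs n) ω) atTop (nhds (X τ ω))

/-- Biadmissible family of rewards indexed by pairs of stopping times. -/
def Biadmissible (𝔈 : FExp μ T ℱ) (X : (Ω → ℝ) → (Ω → ℝ) → Ω → ℝ) : Prop :=
  (∀ τ σ : Ω → ℝ, ∀ hτ : Stop0 ℱ T τ, ∀ hσ : Stop0 ℱ T σ,
      X τ σ ∈ 𝔈.Dom ∧ 0 ≤ᵐ[μ] X τ σ ∧
      Measurable[(hτ.1.max hσ.1).measurableSpace] (X τ σ)) ∧
    ∀ τ σ τ' σ' : Ω → ℝ, Stop0 ℱ T τ → Stop0 ℱ T σ → Stop0 ℱ T τ' → Stop0 ℱ T σ' →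
      ∀ᵐ ω ∂μ, τ ω = τ' ω → σ ω = σ' ω → X τ σ ω = X τ' σ' ω

/-- `sup_{τ,σ ∈ S_0} E[X(τ,σ)] < ∞`. -/
def BddReward2E0 (𝔈 : FExp μ T ℱ) (X : (Ω → ℝ) → (Ω → ℝ) → Ω → ℝ) : Prop :=
  ∃ C : ℝ, ∀ τ σ : Ω → ℝ, Stop0 ℱ T τ → Stop0 ℱ T σ → 𝔈.E0 (X τ σ) ≤ C

/-- `v` is the value function family of the double stopping problem:
`v(S) = esssup_{τ₁,τ₂ ∈ S_S} E_S[X(τ₁,τ₂)]`. -/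
def IsValueFam2 (𝔈 : FExp μ T ℱ) (X : (Ω → ℝ) → (Ω → ℝ) → Ω → ℝ)
    (v : (Ω → ℝ) → Ω → ℝ) : Prop :=
  ∀ S : Ω → ℝ, Stop0 ℱ T S →
    IsEssSupFam μ
      {g | ∃ τ₁ τ₂ : Ω → ℝ, IsStopIn ℱ T S τ₁ ∧ IsStopIn ℱ T S τ₂ ∧
        g = 𝔈.cond S (X τ₁ τ₂)} (v S)

/-- `u₁(θ) = esssup_{τ₁ ∈ S_θ} E_θ[X(τ₁, θ)]`. -/
def IsU1 (𝔈 : FExp μ T ℱ) (X : (Ω → ℝ) → (Ω → ℝ) → Ω → ℝ) (u₁ : (Ω → ℝ) → Ω → ℝ) : Prop :=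
  ∀ θ : Ω → ℝ, Stop0 ℱ T θ →
    IsEssSupFam μ {g | ∃ τ : Ω → ℝ, IsStopIn ℱ T θ τ ∧ g = 𝔈.cond θ (X τ θ)} (u₁ θ)

/-- `u₂(θ) = esssup_{τ₂ ∈ S_θ} E_θ[X(θ, τ₂)]`. -/
def IsU2 (𝔈 : FExp μ T ℱ) (X : (Ω → ℝ) → (Ω → ℝ) → Ω → ℝ) (u₂ : (Ω → ℝ) → Ω → ℝ) : Prop :=
  ∀ θ : Ω → ℝ, Stop0 ℱ T θ →
    IsEssSupFam μ {g | ∃ τ : Ω → ℝ, IsStopIn ℱ T θ τ ∧ g = 𝔈.cond θ (X θ τ)} (u₂ θ)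

/-- Uniform right-continuity of a biadmissible family along stopping times in
`ℰ`-expectation (URCℰ). -/
def URCE2 (ℰ : FExp μ T ℱ) (X : (Ω → ℝ) → (Ω → ℝ) → Ω → ℝ) : Prop :=
  ∀ σ : Ω → ℝ, Stop0 ℱ T σ → ∀ σs : ℕ → Ω → ℝ, (∀ n, Stop0 ℱ T (σs n)) →
    (∀ᵐ ω ∂μ, Antitone (fun n => σs n ω) ∧
      Tendsto (fun n => σs n ω) atTop (nhds (σ ω))) →
    ∀ ε : ℝ, 0 < ε → ∃ N : ℕ, ∀ n ≥ N, ∀ τ : Ω → ℝ, Stop0 ℱ T τ →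
      ℰ.E0 (fun ω => |X τ σ ω - X τ (σs n) ω|) ≤ ε ∧
      ℰ.E0 (fun ω => |X σ τ ω - X (σs n) τ ω|) ≤ ε

/-- Uniform left-continuity of a biadmissible family along stopping times in
`ℰ`-expectation (ULCℰ). -/
def ULCE2 (ℰ : FExp μ T ℱ) (X : (Ω → ℝ) → (Ω → ℝ) → Ω → ℝ) : Prop :=
  ∀ σ : Ω → ℝ, Stop0 ℱ T σ → ∀ σs : ℕ → Ω → ℝ, (∀ n, Stop0 ℱ T (σs n)) →
    (∀ᵐ ω ∂μ, Monotone (fun n => σs n ω) ∧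
      Tendsto (fun n => σs n ω) atTop (nhds (σ ω))) →
    ∀ ε : ℝ, 0 < ε → ∃ N : ℕ, ∀ n ≥ N, ∀ τ : Ω → ℝ, Stop0 ℱ T τ →
      ℰ.E0 (fun ω => |X τ σ ω - X τ (σs n) ω|) ≤ ε ∧
      ℰ.E0 (fun ω => |X σ τ ω - X (σs n) τ ω|) ≤ ε

/-- Uniform continuity (UCℰ) of a biadmissible family. -/
def UCE2 (ℰ : FExp μ T ℱ) (X : (Ω → ℝ) → (Ω → ℝ) → Ω → ℝ) : Prop :=
  URCE2 ℰ X ∧ ULCE2 ℰ X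

/-- `(E, Dom(E))` is dominated by `(Ẽ, Dom(Ẽ))`. -/
def Dominated (𝔈 𝔉 : FExp μ T ℱ) : Prop :=
  𝔈.Dom ⊆ 𝔉.Dom ∧
    ∀ τ : Ω → ℝ, Stop0 ℱ T τ → ∀ ξ η : Ω → ℝ, ξ ∈ 𝔈.Dom → η ∈ 𝔈.Dom →
      ∀ᵐ ω ∂μ, 𝔈.cond τ (ξ + η) ω - 𝔈.cond τ η ω ≤ 𝔉.cond τ ξ ω

/-- The filtration contains all `μ`-null sets (part of the usual conditions). -/
def CompleteFiltration (μ : Measure Ω) (ℱ : Filtration ℝ m) : Prop :=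
  ∀ s : Set Ω, μ s = 0 → ∀ t : ℝ, MeasurableSet[ℱ t] s

/-- The filtration is right-continuous (part of the usual conditions). -/
def RightContinuousFiltration (ℱ : Filtration ℝ m) : Prop :=
  ∀ t : ℝ, (ℱ t : MeasurableSpace Ω) = ⨅ u ∈ Set.Ioi t, ℱ u

/-- A `d`-tuple of stopping times, all in `S_s`. -/
def StopVec (ℱ : Filtration ℝ m) (T : ℝ) (s : Ω → ℝ) {d : ℕ} (τ : Fin d → Ω → ℝ) : Prop :=
  ∀ i, IsStopIn ℱ T s (τ i)

/-- A `d`-admissible family of rewards. -/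
def DAdmissible (𝔈 : FExp μ T ℱ) {d : ℕ} (X : (Fin d → Ω → ℝ) → Ω → ℝ) : Prop :=
  (∀ τ : Fin d → Ω → ℝ, StopVec ℱ T (fun _ => (0 : ℝ)) τ →
      X τ ∈ 𝔈.Dom ∧ 0 ≤ᵐ[μ] X τ ∧
      ∀ h : IsStoppingTime ℱ fun ω => (((⨆ i, τ i ω : ℝ)) : WithTop ℝ),
        Measurable[h.measurableSpace] (X τ)) ∧
    ∀ τ σ : Fin d → Ω → ℝ, StopVec ℱ T (fun _ => (0 : ℝ)) τ →
      StopVec ℱ T (fun _ => (0 : ℝ)) σ →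
      ∀ᵐ ω ∂μ, (∀ i, τ i ω = σ i ω) → X τ ω = X σ ω

/-- `sup_{τ ∈ S_0^d} E[X(τ)] < ∞`. -/
def BddRewardDE0 (𝔈 : FExp μ T ℱ) {d : ℕ} (X : (Fin d → Ω → ℝ) → Ω → ℝ) : Prop :=
  ∃ C : ℝ, ∀ τ : Fin d → Ω → ℝ, StopVec ℱ T (fun _ => (0 : ℝ)) τ → 𝔈.E0 (X τ) ≤ C

/-- `v` is the value function family of the `d`-stopping problem:
`v(S) = esssup_{τ ∈ S_S^d} E_S[X(τ)]`. -/
def IsValueFamD (𝔈 : FExp μ T ℱ) {d : ℕ} (X : (Fin d → Ω → ℝ) → Ω → ℝ)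
    (v : (Ω → ℝ) → Ω → ℝ) : Prop :=
  ∀ S : Ω → ℝ, Stop0 ℱ T S →
    IsEssSupFam μ
      {g | ∃ τ : Fin d → Ω → ℝ, StopVec ℱ T S τ ∧ g = 𝔈.cond S (X τ)} (v S)

/-- `u^{(i)}(θ) = esssup_{τ ∈ S_θ^{d-1}} E_θ[X^{(i)}(τ, θ)]`, where `X^{(i)}(τ, θ)`
inserts `θ` in the `i`-th slot. -/
def IsUi (𝔈 : FExp μ T ℱ) {d : ℕ} (X : (Fin (d + 1) → Ω → ℝ) → Ω → ℝ)
    (ui : Fin (d + 1) → (Ω → ℝ) → Ω → ℝ) : Prop :=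
  ∀ i : Fin (d + 1), ∀ θ : Ω → ℝ, Stop0 ℱ T θ →
    IsEssSupFam μ
      {g | ∃ τ : Fin d → Ω → ℝ, StopVec ℱ T θ τ ∧ g = 𝔈.cond θ (X (i.insertNth θ τ))}
      (ui i θ)

/-- Uniform continuity (UCE) of a `d`-admissible family along monotone sequences of
stopping times. -/
def UCED (𝔈 : FExp μ T ℱ) {d : ℕ} (X : (Fin (d + 1) → Ω → ℝ) → Ω → ℝ) : Prop :=
  ∀ i : Fin (d + 1), ∀ S : Ω → ℝ, Stop0 ℱ T S → ∀ Ss : ℕ → Ω → ℝ,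
    (∀ n, Stop0 ℱ T (Ss n)) →
    ((∀ᵐ ω ∂μ, Monotone fun n => Ss n ω) ∨ (∀ᵐ ω ∂μ, Antitone fun n => Ss n ω)) →
    (∀ᵐ ω ∂μ, Tendsto (fun n => Ss n ω) atTop (nhds (S ω))) →
    ∀ ε : ℝ, 0 < ε → ∃ N : ℕ, ∀ n ≥ N, ∀ θ : Fin d → Ω → ℝ,
      StopVec ℱ T (fun _ => (0 : ℝ)) θ →
      𝔈.E0 (fun ω => |X (i.insertNth (Ss n) θ) ω - X (i.insertNth S θ) ω|) ≤ ε

/-! The family `{E_τ[X(ρ, σ)] : ρ ∈ S_τ}` is upward directed: two stopping times can be pasted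
along the `F_τ`-event on which one of them gives the larger conditional reward. Hence its
essential supremum `U₁(τ, σ)` is the a.s. limit of an increasing sequence `E_τ[X(ρₙ, σ)]`, and
(H1) yields `E[U₁(τ, σ)] ≤ supₙ E[X(ρₙ, σ)]`. For each `ρ`, domination gives
`E[X(ρ, σ₁)] ≤ E[X(ρ, σ₂)] + Ẽ[|X(ρ, σ₁) - X(ρ, σ₂)|] ≤ E[U₁(τ, σ₂)] + C`; exchanging `σ₁` and
`σ₂` gives the bound on the absolute value. -/

theorem DirectedOn.exists_seq_chain {α : Type*} {r : α → α → Prop} {s : Set α}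
    (hs : DirectedOn r s) {g : ℕ → α} (hg : ∀ n, g n ∈ s) :
    ∃ h : ℕ → α, (∀ n, h n ∈ s) ∧ (∀ n, r (h n) (h (n + 1))) ∧ ∀ n, r (g n) (h n) := by
  choose! ub hub hub_left hub_right using hs
  let h : ℕ → α := fun n => Nat.rec (ub (g 0) (g 0)) (fun k hk => ub hk (g (k + 1))) n
  have hmem : ∀ n, h n ∈ s := by
    intro n
    induction n with
    | zero => exact hub _ (hg 0) _ (hg 0)
    | succ k ih => exact hub _ ih _ (hg (k + 1))
  refine ⟨h, hmem, fun n => hub_left _ (hmem n) _ (hg (n + 1)), fun n => ?_⟩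
  cases n with
  | zero => exact hub_left _ (hg 0) _ (hg 0)
  | succ k => exact hub_right _ (hmem k) _ (hg (k + 1))

theorem IsStoppingTime.piecewise_of_measurableSet {ι : Type*} [Preorder ι] {f : Filtration ι m}
    {τ ρ ρ' : Ω → WithTop ι} {s : Set Ω} [DecidablePred (· ∈ s)] (hτ : IsStoppingTime f τ)
    (hρ : IsStoppingTime f ρ) (hρ' : IsStoppingTime f ρ') (hτρ : τ ≤ ρ) (hτρ' : τ ≤ ρ')
    (hs : MeasurableSet[hτ.measurableSpace] s) : IsStoppingTime f (s.piecewise ρ ρ') := by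
  intro i
  have : {ω | s.piecewise ρ ρ' ω ≤ i} =
      s ∩ {ω | τ ω ≤ i} ∩ {ω | ρ ω ≤ i} ∪ sᶜ ∩ {ω | τ ω ≤ i} ∩ {ω | ρ' ω ≤ i} := by
    ext ω
    by_cases hω : ω ∈ s
    · simpa [hω] using fun h => (hτρ ω).trans h
    · simpa [hω] using fun h => (hτρ' ω).trans h
  rw [this]
  exact ((hs.2 i).inter (hρ i)).union ((hs.compl.2 i).inter (hρ' i))

section Integral

open Real

variable [IsFiniteMeasure μ]

lemma integrable_arctan_comp {f : Ω → ℝ} (hf : Measurable f) :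
    Integrable (fun ω => arctan (f ω)) μ :=
  Integrable.of_bound (measurable_arctan.comp hf).aestronglyMeasurable (π / 2)
    (ae_of_all _ fun ω => (abs_lt.2 (arctan_mem_Ioo (f ω))).le)

lemma integral_arctan_mono {f g : Ω → ℝ} (hf : Measurable f) (hg : Measurable g)
    (h : f ≤ᵐ[μ] g) : ∫ ω, arctan (f ω) ∂μ ≤ ∫ ω, arctan (g ω) ∂μ :=
  integral_mono_ae (integrable_arctan_comp hf) (integrable_arctan_comp hg)
    (h.mono fun _ hω => arctan_strictMono.monotone hω)

lemma tendsto_integral_arctan {f : ℕ → Ω → ℝ} {g : Ω → ℝ} (hf : ∀ n, Measurable (f n))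
    (h : ∀ᵐ ω ∂μ, Tendsto (fun n => f n ω) atTop (nhds (g ω))) :
    Tendsto (fun n => ∫ ω, arctan (f n ω) ∂μ) atTop (nhds (∫ ω, arctan (g ω) ∂μ)) :=
  tendsto_integral_of_dominated_convergence (fun _ => π / 2)
    (fun n => (measurable_arctan.comp (hf n)).aestronglyMeasurable) (integrable_const _)
    (fun n => ae_of_all _ fun ω => (abs_lt.2 (arctan_mem_Ioo (f n ω))).le)
    (h.mono fun _ hω => (continuous_arctan.tendsto _).comp hω)

lemma ae_le_of_integral_arctan_max_le {f g : Ω → ℝ} (hf : Measurable f) (hg : Measurable g)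
    (h : ∫ ω, arctan (max (g ω) (f ω)) ∂μ ≤ ∫ ω, arctan (g ω) ∂μ) : f ≤ᵐ[μ] g := by
  have hle : (fun ω => arctan (g ω)) ≤ᵐ[μ] fun ω => arctan (max (g ω) (f ω)) :=
    ae_of_all _ fun ω => arctan_strictMono.monotone (le_max_left _ _)
  have heq := (integral_eq_iff_of_ae_le (integrable_arctan_comp hg)
    (integrable_arctan_comp (hg.max hf)) hle).1
    (le_antisymm (integral_mono_ae (integrable_arctan_comp hg)
      (integrable_arctan_comp (hg.max hf)) hle) h)
  filter_upwards [heq] with ω hω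
  exact max_eq_left_iff.1 (arctan_injective hω).symm

lemma bddAbove_integral_arctan {s : Set (Ω → ℝ)} (hmeas : ∀ f ∈ s, Measurable f) :
    BddAbove ((fun f => ∫ ω, arctan (f ω) ∂μ) '' s) := by
  refine ⟨∫ _, π / 2 ∂μ, ?_⟩
  rintro _ ⟨f, hf, rfl⟩
  exact integral_mono_ae (integrable_arctan_comp (hmeas f hf)) (integrable_const _)
    (ae_of_all _ fun ω => (arctan_lt_pi_div_two _).le)

lemma DirectedOn.exists_chain_tendsto_sSup_integral_arctan {s : Set (Ω → ℝ)}
    (hne : s.Nonempty) (hmeas : ∀ f ∈ s, Measurable f)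
    (hdir : DirectedOn (fun f g => f ≤ᵐ[μ] g) s) :
    ∃ h : ℕ → Ω → ℝ, (∀ n, h n ∈ s) ∧ (∀ n, h n ≤ᵐ[μ] h (n + 1)) ∧
      Tendsto (fun n => ∫ ω, arctan (h n ω) ∂μ) atTop
        (nhds (sSup ((fun f => ∫ ω, arctan (f ω) ∂μ) '' s))) := by
  have hbdd := bddAbove_integral_arctan (μ := μ) hmeas
  obtain ⟨v, -, hvc, hvs⟩ := exists_seq_tendsto_sSup (hne.image _) hbdd
  choose g hgs hgv using hvs
  obtain ⟨h, hs, hmono, hgh⟩ := DirectedOn.exists_seq_chain hdir hgs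
  refine ⟨h, hs, hmono, tendsto_of_tendsto_of_tendsto_of_le_of_le hvc tendsto_const_nhds
    (fun n => ?_) (fun n => le_csSup hbdd ⟨_, hs n, rfl⟩)⟩
  rw [← hgv n]
  exact integral_arctan_mono (hmeas _ (hgs n)) (hmeas _ (hs n)) (hgh n)

theorem IsEssSupFam.exists_monotone_tendsto {s : Set (Ω → ℝ)} {u : Ω → ℝ}
    (hu : IsEssSupFam μ s u) (hne : s.Nonempty) (hmeas : ∀ f ∈ s, Measurable f)
    (hdir : DirectedOn (fun f g => f ≤ᵐ[μ] g) s) :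
    ∃ h : ℕ → Ω → ℝ, (∀ n, h n ∈ s) ∧
      ∀ᵐ ω ∂μ, Monotone (fun n => h n ω) ∧ Tendsto (fun n => h n ω) atTop (nhds (u ω)) := by
  obtain ⟨h, hs, hmono, hΦh⟩ :=
    DirectedOn.exists_chain_tendsto_sSup_integral_arctan hne hmeas hdir
  have hhm : ∀ n, Measurable (h n) := fun n => hmeas _ (hs n)
  have hmono_ae : ∀ᵐ ω ∂μ, Monotone fun n => h n ω :=
    (ae_all_iff.2 hmono).mono fun _ hω => monotone_nat_of_le_succ hω
  have hle_u : ∀ᵐ ω ∂μ, ∀ n, h n ω ≤ u ω := ae_all_iff.2 fun n => hu.1 _ (hs n)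
  set L : Ω → ℝ := fun ω => ⨆ n, h n ω
  have htendL : ∀ᵐ ω ∂μ, Tendsto (fun n => h n ω) atTop (nhds (L ω)) := by
    filter_upwards [hmono_ae, hle_u] with ω hm hb
    exact tendsto_atTop_ciSup hm ⟨u ω, by rintro _ ⟨n, rfl⟩; exact hb n⟩
  have hΦL := tendsto_nhds_unique (tendsto_integral_arctan hhm htendL) hΦh
  -- `L` maximises `∫ arctan` over `s`; `max L f` is below a member of `s`, so `max L f = L` a.e.
  have hL_ub : ∀ f ∈ s, f ≤ᵐ[μ] L := by
    intro f hf
    refine ae_le_of_integral_arctan_max_le (hmeas f hf) (Measurable.iSup hhm) ?_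
    rw [hΦL]
    refine le_of_tendsto (tendsto_integral_arctan (fun n => (hhm n).max (hmeas f hf))
      (htendL.mono fun _ hω => hω.max tendsto_const_nhds)) (Eventually.of_forall fun n => ?_)
    obtain ⟨k, hk, hhk, hfk⟩ := hdir _ (hs n) _ hf
    refine (integral_arctan_mono ((hhm n).max (hmeas f hf)) (hmeas k hk) ?_).trans
      (le_csSup (bddAbove_integral_arctan hmeas) ⟨k, hk, rfl⟩)
    filter_upwards [hhk, hfk] with ω h1 h2 using max_le h1 h2
  have hLu : L =ᵐ[μ] u := by
    refine EventuallyLE.antisymm ?_ (hu.2 L hL_ub)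
    filter_upwards [htendL, hle_u] with ω h1 h2 using le_of_tendsto' h1 h2
  refine ⟨h, hs, ?_⟩
  filter_upwards [hmono_ae, htendL, hLu] with ω h1 h2 h3
  exact ⟨h1, h3 ▸ h2⟩

end Integral

lemma stop0_zero (hT : 0 ≤ T) : Stop0 ℱ T fun _ => 0 :=
  ⟨isStoppingTime_const ℱ 0, fun _ => le_rfl, fun _ => hT⟩

lemma Stop0.isStopIn_self {τ : Ω → ℝ} (hτ : Stop0 ℱ T τ) : IsStopIn ℱ T τ τ :=
  ⟨hτ.1, fun _ => le_rfl, hτ.2.2⟩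

lemma IsStopIn.stop0 {τ ρ : Ω → ℝ} (hτ : Stop0 ℱ T τ) (hρ : IsStopIn ℱ T τ ρ) :
    Stop0 ℱ T ρ :=
  ⟨hρ.1, fun ω => (hτ.2.1 ω).trans (hρ.2.1 ω), hρ.2.2⟩

lemma IsStopIn.piecewise {τ ρ ρ' : Ω → ℝ} {A : Set Ω} [DecidablePred (· ∈ A)]
    (hτ : Stop0 ℱ T τ) (hA : MeasurableSet[hτ.1.measurableSpace] A)
    (hρ : IsStopIn ℱ T τ ρ) (hρ' : IsStopIn ℱ T τ ρ') : IsStopIn ℱ T τ (A.piecewise ρ ρ') := by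
  refine ⟨?_, fun ω => ?_, fun ω => ?_⟩
  · have hcoe : (fun ω => ((A.piecewise ρ ρ' ω : ℝ) : WithTop ℝ)) =
        A.piecewise (fun ω => (ρ ω : WithTop ℝ)) fun ω => (ρ' ω : WithTop ℝ) := by
      ext ω
      by_cases hω : ω ∈ A <;> simp [hω]
    rw [hcoe]
    exact IsStoppingTime.piecewise_of_measurableSet hτ.1 hρ.1 hρ'.1
      (fun ω => WithTop.coe_le_coe.2 (hρ.2.1 ω))
      (fun ω => WithTop.coe_le_coe.2 (hρ'.2.1 ω)) hA
  · by_cases hω : ω ∈ A <;> simp [hω, hρ.2.1 ω, hρ'.2.1 ω]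
  · by_cases hω : ω ∈ A <;> simp [hω, hρ.2.2 ω, hρ'.2.2 ω]

namespace FExp

variable (𝔈 : FExp μ T ℱ) {τ ξ η : Ω → ℝ}

lemma cond_congr (hτ : Stop0 ℱ T τ) (hξ : ξ ∈ 𝔈.Dom) (hξ0 : 0 ≤ᵐ[μ] ξ) (hη : η ∈ 𝔈.Dom)
    (hη0 : 0 ≤ᵐ[μ] η) (h : ξ =ᵐ[μ] η) : 𝔈.cond τ ξ =ᵐ[μ] 𝔈.cond τ η :=
  (𝔈.mono hτ hξ hξ0 hη hη0 h.le).antisymm (𝔈.mono hτ hη hη0 hξ hξ0 h.symm.le)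

lemma cond_ae_eq_on (hτ : Stop0 ℱ T τ) {A : Set Ω} (hA : MeasurableSet[hτ.1.measurableSpace] A)
    (hξ : ξ ∈ 𝔈.Dom) (hξ0 : 0 ≤ᵐ[μ] ξ) (hη : η ∈ 𝔈.Dom) (hη0 : 0 ≤ᵐ[μ] η)
    (h : ∀ᵐ ω ∂μ, ω ∈ A → ξ ω = η ω) : ∀ᵐ ω ∂μ, ω ∈ A → 𝔈.cond τ ξ ω = 𝔈.cond τ η ω := by
  have hAm := hτ.1.measurableSpace_le A hA
  have hind : A.indicator ξ =ᵐ[μ] A.indicator η := by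
    filter_upwards [h] with ω hω
    by_cases hωA : ω ∈ A <;> simp [hωA, hω]
  have hind0 : ∀ {ζ : Ω → ℝ}, 0 ≤ᵐ[μ] ζ → 0 ≤ᵐ[μ] A.indicator ζ := fun hζ =>
    hζ.mono fun _ hω => indicator_nonneg (fun _ _ => hω) _
  filter_upwards [𝔈.zero_one hτ hξ hξ0 hA, 𝔈.zero_one hτ hη hη0 hA,
    𝔈.cond_congr hτ (𝔈.indicator_mem hξ hAm) (hind0 hξ0) (𝔈.indicator_mem hη hAm)
      (hind0 hη0) hind] with ω h1 h2 h3 hωA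
  simpa [hωA] using h1.symm.trans (h3.trans h2)

variable [IsProbabilityMeasure μ]

lemma E0_mono (hT : 0 ≤ T) (hξ : ξ ∈ 𝔈.Dom) (hξ0 : 0 ≤ᵐ[μ] ξ) (hη : η ∈ 𝔈.Dom)
    (hη0 : 0 ≤ᵐ[μ] η) (h : ξ ≤ᵐ[μ] η) : 𝔈.E0 ξ ≤ 𝔈.E0 η :=
  (eventually_const (f := ae μ)).1 <| (𝔈.E0_eq hξ hξ0).symm.le.trans <|
    (𝔈.mono (stop0_zero hT) hξ hξ0 hη hη0 h).trans (𝔈.E0_eq hη hη0).le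

lemma E0_cond (hT : 0 ≤ T) (hτ : Stop0 ℱ T τ) (hξ : ξ ∈ 𝔈.Dom) (hξ0 : 0 ≤ᵐ[μ] ξ) :
    𝔈.E0 (𝔈.cond τ ξ) = 𝔈.E0 ξ :=
  (eventually_const (f := ae μ)).1 <|
    (𝔈.E0_eq (𝔈.cond_mem hτ hξ hξ0) (𝔈.cond_nonneg hτ hξ hξ0)).symm.trans <|
    (𝔈.time_consistent (stop0_zero hT) hτ hτ.2.1 hξ hξ0).trans (𝔈.E0_eq hξ hξ0)

lemma E0_add_const (hT : 0 ≤ T) (hξ : ξ ∈ 𝔈.Dom) (hξ0 : 0 ≤ᵐ[μ] ξ) {c : ℝ} (hc : 0 ≤ c) :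
    𝔈.E0 (ξ + fun _ => c) = 𝔈.E0 ξ + c := by
  have hsum0 : 0 ≤ᵐ[μ] ξ + fun _ => c := hξ0.mono fun _ hω => add_nonneg hω hc
  refine (eventually_const (f := ae μ)).1 ?_
  filter_upwards [𝔈.E0_eq (𝔈.add_mem hξ (𝔈.const_mem c)) hsum0,
    𝔈.translation (stop0_zero hT) hξ hξ0 (𝔈.const_mem c) (ae_of_all _ fun _ => hc)
      measurable_const, 𝔈.E0_eq hξ hξ0] with ω h1 h2 h3
  simp only [Pi.add_apply] at h2
  rw [← h1, h2, h3]

lemma E0_le_of_monotone_tendsto (hT : 0 ≤ T) {f : ℕ → Ω → ℝ} {g : Ω → ℝ} {c : ℝ}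
    (hf : ∀ n, f n ∈ 𝔈.Dom) (hf0 : ∀ n, 0 ≤ᵐ[μ] f n) (hfm : ∀ n, Measurable (f n))
    (hg : g ∈ 𝔈.Dom) (hg0 : 0 ≤ᵐ[μ] g) (hmono : ∀ᵐ ω ∂μ, Monotone fun n => f n ω)
    (htend : ∀ᵐ ω ∂μ, Tendsto (fun n => f n ω) atTop (nhds (g ω)))
    (hc : ∀ n, 𝔈.E0 (f n) ≤ c) : 𝔈.E0 g ≤ c := by
  have hgm : AEMeasurable g μ :=
    aemeasurable_of_tendsto_metrizable_ae atTop (fun n => (hfm n).aemeasurable) htend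
  refine le_of_forall_pos_le_add fun δ hδ => ?_
  -- By (H1), `E[g]` is the limit of `E[g 1_{A n}]`, and `g 1_{A n} ≤ f n + δ`.
  set A : ℕ → Set Ω := accumulate fun k => {ω | hgm.mk g ω < f k ω + δ}
  have hAm : ∀ n, MeasurableSet (A n) := fun n =>
    MeasurableSet.biUnion (to_countable _) fun k _ =>
      measurableSet_lt hgm.measurable_mk ((hfm k).add_const δ)
  have hAcover : ∀ᵐ ω ∂μ, ω ∈ ⋃ n, A n := by
    filter_upwards [htend, hgm.ae_eq_mk] with ω hω hωg
    rw [iUnion_accumulate, mem_iUnion]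
    simp only [mem_ofPred_eq, ← hωg]
    exact ((hω.add_const δ).eventually (lt_mem_nhds (lt_add_of_pos_right _ hδ))).exists
  have hbound : ∀ n, (A n).indicator g ≤ᵐ[μ] f n + fun _ => δ := by
    intro n
    filter_upwards [hmono, hgm.ae_eq_mk, hf0 n] with ω hm hωg hfn
    by_cases hω : ω ∈ A n
    · obtain ⟨k, hk, hgk⟩ := mem_accumulate.1 hω
      rw [indicator_of_mem hω, hωg]
      exact hgk.le.trans (add_le_add_left (hm hk) δ)
    · rw [indicator_of_notMem hω]
      exact add_nonneg hfn hδ.le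
  refine le_of_tendsto (𝔈.h1 hg hg0 hAm monotone_accumulate hAcover)
    (Eventually.of_forall fun n => ?_)
  calc 𝔈.E0 ((A n).indicator g)
      ≤ 𝔈.E0 (f n + fun _ => δ) :=
        𝔈.E0_mono hT (𝔈.indicator_mem hg (hAm n))
          (hg0.mono fun _ hω => indicator_nonneg (fun _ _ => hω) _)
          (𝔈.add_mem (hf n) (𝔈.const_mem δ)) ((hf0 n).mono fun _ hω => add_nonneg hω hδ.le)
          (hbound n)
    _ = 𝔈.E0 (f n) + δ := 𝔈.E0_add_const hT (hf n) (hf0 n) hδ.le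
    _ ≤ c + δ := add_le_add_left (hc n) δ

end FExp

lemma Dominated.E0_add_le [IsProbabilityMeasure μ] {𝔈 𝔉 : FExp μ T ℱ} (hdom : Dominated 𝔈 𝔉)
    (hT : 0 ≤ T) {ξ η : Ω → ℝ} (hξ : ξ ∈ 𝔈.Dom) (hξ0 : 0 ≤ᵐ[μ] ξ) (hη : η ∈ 𝔈.Dom)
    (hη0 : 0 ≤ᵐ[μ] η) : 𝔈.E0 (ξ + η) ≤ 𝔈.E0 η + 𝔉.E0 ξ := by
  have hsum0 : 0 ≤ᵐ[μ] ξ + η := by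
    filter_upwards [hξ0, hη0] with ω h1 h2 using add_nonneg h1 h2
  refine (eventually_const (f := ae μ)).1 ?_
  filter_upwards [hdom.2 _ (stop0_zero hT) ξ η hξ hη, 𝔈.E0_eq (𝔈.add_mem hξ hη) hsum0,
    𝔈.E0_eq hη hη0, 𝔉.E0_eq (hdom.1 hξ) hξ0] with ω hω h1 h2 h3
  rw [← h1, ← h2, ← h3]
  linarith

lemma Dominated.E0_le_add_E0_abs_sub [IsProbabilityMeasure μ] {𝔈 𝔉 : FExp μ T ℱ}
    (hdom : Dominated 𝔈 𝔉) (hT : 0 ≤ T) {ξ η : Ω → ℝ} (hξ : ξ ∈ 𝔈.Dom) (hξ0 : 0 ≤ᵐ[μ] ξ)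
    (hη : η ∈ 𝔈.Dom) (hη0 : 0 ≤ᵐ[μ] η) :
    𝔈.E0 ξ ≤ 𝔈.E0 η + 𝔉.E0 (fun ω => |ξ ω - η ω|) := by
  have hd : (fun ω => |ξ ω - η ω|) ∈ 𝔈.Dom := by
    refine 𝔈.sandwich_mem (𝔈.add_mem hξ hη) ?_
    filter_upwards [hξ0, hη0] with ω h1 h2
    simp only [Pi.zero_apply, Pi.add_apply] at h1 h2 ⊢
    exact ⟨abs_nonneg _, abs_le.2 ⟨by linarith, by linarith⟩⟩
  calc 𝔈.E0 ξ
      ≤ 𝔈.E0 ((fun ω => |ξ ω - η ω|) + η) :=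
        𝔈.E0_mono hT hξ hξ0 (𝔈.add_mem hd hη)
          (hη0.mono fun _ hω => add_nonneg (abs_nonneg _) hω)
          (ae_of_all _ fun ω => by
            simp only [Pi.add_apply]
            linarith [le_abs_self (ξ ω - η ω)])
    _ ≤ 𝔈.E0 η + 𝔉.E0 (fun ω => |ξ ω - η ω|) :=
        hdom.E0_add_le hT hd (ae_of_all _ fun _ => abs_nonneg _) hη hη0


def condRewardSet (𝔈 : FExp μ T ℱ) (X : (Ω → ℝ) → (Ω → ℝ) → Ω → ℝ) (τ σ : Ω → ℝ) :
    Set (Ω → ℝ) :=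
  {g | ∃ τ₁ : Ω → ℝ, IsStopIn ℱ T τ τ₁ ∧ g = 𝔈.cond τ (X τ₁ σ)}

namespace Biadmissible

variable {𝔈 : FExp μ T ℱ} {X : (Ω → ℝ) → (Ω → ℝ) → Ω → ℝ} {τ σ ρ ρ' : Ω → ℝ}

lemma cond_mem_dom_nonneg_measurable (hX : Biadmissible 𝔈 X) (hτ : Stop0 ℱ T τ)
    (hσ : Stop0 ℱ T σ) (hρ : IsStopIn ℱ T τ ρ) :
    𝔈.cond τ (X ρ σ) ∈ 𝔈.Dom ∧ 0 ≤ᵐ[μ] 𝔈.cond τ (X ρ σ) ∧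
      Measurable[hτ.1.measurableSpace] (𝔈.cond τ (X ρ σ)) :=
  let ⟨hd, h0, _⟩ := hX.1 ρ σ (hρ.stop0 hτ) hσ
  ⟨𝔈.cond_mem hτ hd h0, 𝔈.cond_nonneg hτ hd h0, 𝔈.cond_adapted hτ hd h0⟩

lemma cond_piecewise (hX : Biadmissible 𝔈 X) (hτ : Stop0 ℱ T τ) (hσ : Stop0 ℱ T σ)
    {A : Set Ω} [DecidablePred (· ∈ A)] (hA : MeasurableSet[hτ.1.measurableSpace] A)
    (hρ : IsStopIn ℱ T τ ρ) (hρ' : IsStopIn ℱ T τ ρ') :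
    𝔈.cond τ (X (A.piecewise ρ ρ') σ) =ᵐ[μ]
      A.piecewise (𝔈.cond τ (X ρ σ)) (𝔈.cond τ (X ρ' σ)) := by
  have hρ0 := hρ.stop0 hτ
  have hρ'0 := hρ'.stop0 hτ
  have hρ''0 := (IsStopIn.piecewise hτ hA hρ hρ').stop0 hτ
  obtain ⟨hd, h0, -⟩ := hX.1 ρ σ hρ0 hσ
  obtain ⟨hd', h0', -⟩ := hX.1 ρ' σ hρ'0 hσ
  obtain ⟨hd'', h0'', -⟩ := hX.1 _ σ hρ''0 hσ
  have honA := 𝔈.cond_ae_eq_on hτ hA hd'' h0'' hd h0 <| by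
    filter_upwards [hX.2 _ σ ρ σ hρ''0 hσ hρ0 hσ] with ω hω hωA
    exact hω (piecewise_eq_of_mem _ _ _ hωA) rfl
  have honAc := 𝔈.cond_ae_eq_on hτ hA.compl hd'' h0'' hd' h0' <| by
    filter_upwards [hX.2 _ σ ρ' σ hρ''0 hσ hρ'0 hσ] with ω hω hωA
    exact hω (piecewise_eq_of_notMem _ _ _ hωA) rfl
  filter_upwards [honA, honAc] with ω h1 h2
  by_cases hωA : ω ∈ A
  · rw [piecewise_eq_of_mem _ _ _ hωA, h1 hωA]
  · rw [piecewise_eq_of_notMem _ _ _ hωA, h2 hωA]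

lemma directedOn_condRewardSet (hX : Biadmissible 𝔈 X) (hτ : Stop0 ℱ T τ)
    (hσ : Stop0 ℱ T σ) : DirectedOn (fun f g => f ≤ᵐ[μ] g) (condRewardSet 𝔈 X τ σ) := by
  classical
  rintro _ ⟨ρ, hρ, rfl⟩ _ ⟨ρ', hρ', rfl⟩
  set f := 𝔈.cond τ (X ρ σ)
  set f' := 𝔈.cond τ (X ρ' σ)
  set A := {ω | f' ω ≤ f ω}
  have hA : MeasurableSet[hτ.1.measurableSpace] A :=
    measurableSet_le (hX.cond_mem_dom_nonneg_measurable hτ hσ hρ').2.2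
      (hX.cond_mem_dom_nonneg_measurable hτ hσ hρ).2.2
  have hmax : A.piecewise f f' = fun ω => max (f ω) (f' ω) := by
    ext ω
    by_cases hωA : ω ∈ A
    · rw [piecewise_eq_of_mem _ _ _ hωA, max_eq_left hωA]
    · rw [piecewise_eq_of_notMem _ _ _ hωA, max_eq_right (le_of_not_ge hωA)]
  have hpw := hX.cond_piecewise hτ hσ hA hρ hρ'
  rw [hmax] at hpw
  refine ⟨_, ⟨_, IsStopIn.piecewise hτ hA hρ hρ', rfl⟩, ?_, ?_⟩ <;>
    filter_upwards [hpw] with ω hω <;> rw [hω]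
  exacts [le_max_left _ _, le_max_right _ _]

variable [IsProbabilityMeasure μ] {u : Ω → ℝ}

lemma exists_monotone_tendsto_of_isEssSupFam (hX : Biadmissible 𝔈 X) (hτ : Stop0 ℱ T τ)
    (hσ : Stop0 ℱ T σ) (hu : IsEssSupFam μ (condRewardSet 𝔈 X τ σ) u) :
    ∃ ρ : ℕ → Ω → ℝ, (∀ n, IsStopIn ℱ T τ (ρ n)) ∧
      ∀ᵐ ω ∂μ, Monotone (fun n => 𝔈.cond τ (X (ρ n) σ) ω) ∧
        Tendsto (fun n => 𝔈.cond τ (X (ρ n) σ) ω) atTop (nhds (u ω)) := by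
  obtain ⟨h, hs, hlim⟩ := hu.exists_monotone_tendsto ⟨_, _, hτ.isStopIn_self, rfl⟩
    (by
      rintro _ ⟨ρ, hρ, rfl⟩
      exact (hX.cond_mem_dom_nonneg_measurable hτ hσ hρ).2.2.mono hτ.1.measurableSpace_le le_rfl)
    (hX.directedOn_condRewardSet hτ hσ)
  choose ρ hρ hhρ using hs
  obtain rfl : h = fun n => 𝔈.cond τ (X (ρ n) σ) := funext hhρ
  exact ⟨ρ, hρ, hlim⟩

lemma mem_dom_of_isEssSupFam (hT : 0 ≤ T) (hX : Biadmissible 𝔈 X) (hbdd : BddReward2E0 𝔈 X)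
    (hτ : Stop0 ℱ T τ) (hσ : Stop0 ℱ T σ) (hu : IsEssSupFam μ (condRewardSet 𝔈 X τ σ) u) :
    u ∈ 𝔈.Dom ∧ 0 ≤ᵐ[μ] u := by
  obtain ⟨ρ, hρ, hlim⟩ := hX.exists_monotone_tendsto_of_isEssSupFam hτ hσ hu
  have hcond n := hX.cond_mem_dom_nonneg_measurable hτ hσ (hρ n)
  obtain ⟨C, hC⟩ := hbdd
  refine ⟨𝔈.h5 (fun n => (hcond n).1) (fun n => (hcond n).2.1) (hlim.mono fun _ h => h.2)
    ⟨C, Frequently.of_forall fun n => ?_⟩, ?_⟩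
  · obtain ⟨hd, h0, -⟩ := hX.1 _ σ ((hρ n).stop0 hτ) hσ
    rw [𝔈.E0_cond hT hτ hd h0]
    exact hC _ _ ((hρ n).stop0 hτ) hσ
  · filter_upwards [hlim, ae_all_iff.2 fun n => (hcond n).2.1] with ω h1 h2
    exact ge_of_tendsto' h1.2 h2

lemma E0_le_of_isEssSupFam (hT : 0 ≤ T) (hX : Biadmissible 𝔈 X) (hbdd : BddReward2E0 𝔈 X)
    (hτ : Stop0 ℱ T τ) (hσ : Stop0 ℱ T σ) (hu : IsEssSupFam μ (condRewardSet 𝔈 X τ σ) u)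
    {c : ℝ} (hc : ∀ f ∈ condRewardSet 𝔈 X τ σ, 𝔈.E0 f ≤ c) : 𝔈.E0 u ≤ c := by
  obtain ⟨ρ, hρ, hlim⟩ := hX.exists_monotone_tendsto_of_isEssSupFam hτ hσ hu
  obtain ⟨hud, hu0⟩ := hX.mem_dom_of_isEssSupFam hT hbdd hτ hσ hu
  have hcond n := hX.cond_mem_dom_nonneg_measurable hτ hσ (hρ n)
  exact 𝔈.E0_le_of_monotone_tendsto hT (fun n => (hcond n).1) (fun n => (hcond n).2.1)
    (fun n => (hcond n).2.2.mono hτ.1.measurableSpace_le le_rfl) hud hu0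
    (hlim.mono fun _ h => h.1) (hlim.mono fun _ h => h.2)
    fun n => hc _ ⟨_, hρ n, rfl⟩

lemma E0_le_E0_add_of_isEssSupFam (hT : 0 ≤ T) {𝔉 : FExp μ T ℱ} (hdom : Dominated 𝔈 𝔉)
    (hX : Biadmissible 𝔈 X) (hbdd : BddReward2E0 𝔈 X) {σ₁ σ₂ u₁ u₂ : Ω → ℝ}
    (hτ : Stop0 ℱ T τ) (hσ₁ : Stop0 ℱ T σ₁) (hσ₂ : Stop0 ℱ T σ₂)
    (hu₁ : IsEssSupFam μ (condRewardSet 𝔈 X τ σ₁) u₁)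
    (hu₂ : IsEssSupFam μ (condRewardSet 𝔈 X τ σ₂) u₂) {C : ℝ}
    (hC : ∀ S, Stop0 ℱ T S → 𝔉.E0 (fun ω => |X S σ₁ ω - X S σ₂ ω|) ≤ C) :
    𝔈.E0 u₁ ≤ 𝔈.E0 u₂ + C := by
  obtain ⟨hu₂d, hu₂0⟩ := hX.mem_dom_of_isEssSupFam hT hbdd hτ hσ₂ hu₂
  refine hX.E0_le_of_isEssSupFam hT hbdd hτ hσ₁ hu₁ ?_
  rintro _ ⟨ρ, hρ, rfl⟩
  have hρ0 := hρ.stop0 hτ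
  obtain ⟨hd₁, h0₁, -⟩ := hX.1 ρ σ₁ hρ0 hσ₁
  obtain ⟨hd₂, h0₂, -⟩ := hX.1 ρ σ₂ hρ0 hσ₂
  obtain ⟨hc₂, hc₂0, -⟩ := hX.cond_mem_dom_nonneg_measurable hτ hσ₂ hρ
  calc 𝔈.E0 (𝔈.cond τ (X ρ σ₁))
      = 𝔈.E0 (X ρ σ₁) := 𝔈.E0_cond hT hτ hd₁ h0₁
    _ ≤ 𝔈.E0 (X ρ σ₂) + 𝔉.E0 (fun ω => |X ρ σ₁ ω - X ρ σ₂ ω|) :=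
        hdom.E0_le_add_E0_abs_sub hT hd₁ h0₁ hd₂ h0₂
    _ = 𝔈.E0 (𝔈.cond τ (X ρ σ₂)) + 𝔉.E0 (fun ω => |X ρ σ₁ ω - X ρ σ₂ ω|) := by
        rw [𝔈.E0_cond hT hτ hd₂ h0₂]
    _ ≤ 𝔈.E0 u₂ + C :=
        add_le_add (𝔈.E0_mono hT hc₂ hc₂0 hu₂d hu₂0 (hu₂.1 _ ⟨ρ, hρ, rfl⟩)) (hC ρ hρ0)

end Biadmissible


/-- the key domination estimate for `U₁`. -/
theorem U1_estimate [IsProbabilityMeasure μ] (hT : 0 < T)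
    (𝔈 𝔉 : FExp μ T ℱ) (hdom : Dominated 𝔈 𝔉)
    (X : (Ω → ℝ) → (Ω → ℝ) → Ω → ℝ) (hX : Biadmissible 𝔈 X)
    (hbdd : BddReward2E0 𝔈 X)
    (U1 : (Ω → ℝ) → (Ω → ℝ) → Ω → ℝ)
    (hU1 : ∀ τ σ : Ω → ℝ, Stop0 ℱ T τ → Stop0 ℱ T σ →
      IsEssSupFam μ
        {g | ∃ τ₁ : Ω → ℝ, IsStopIn ℱ T τ τ₁ ∧ g = 𝔈.cond τ (X τ₁ σ)} (U1 τ σ))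
    (τ σ₁ σ₂ : Ω → ℝ) (hτ : Stop0 ℱ T τ) (hσ₁ : Stop0 ℱ T σ₁) (hσ₂ : Stop0 ℱ T σ₂)
    (C : ℝ)
    (hC : ∀ S : Ω → ℝ, Stop0 ℱ T S →
      𝔉.E0 (fun ω => |X S σ₁ ω - X S σ₂ ω|) ≤ C) :
    |𝔈.E0 (U1 τ σ₁) - 𝔈.E0 (U1 τ σ₂)| ≤ C := by
  have hC' : ∀ S, Stop0 ℱ T S → 𝔉.E0 (fun ω => |X S σ₂ ω - X S σ₁ ω|) ≤ C := fun S hS => by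
    simpa only [abs_sub_comm] using hC S hS
  have h₁₂ := hX.E0_le_E0_add_of_isEssSupFam hT.le hdom hbdd hτ hσ₁ hσ₂
    (hU1 τ σ₁ hτ hσ₁) (hU1 τ σ₂ hτ hσ₂) hC
  have h₂₁ := hX.E0_le_E0_add_of_isEssSupFam hT.le hdom hbdd hτ hσ₂ hσ₁
    (hU1 τ σ₂ hτ hσ₂) (hU1 τ σ₁ hτ hσ₁) hC'
  exact abs_sub_le_iff.2 ⟨by linarith, by linarith⟩

end OptMultStop
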